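/- arXiv:1506.00163 — 2 statements merged into one kernel-verified Lean document; each statement's English description precedes it below -/
import Mathlib

section
/- Let μ be a nonnegative Borel measure on ℂⁿ and α > 0, p ≥ 1. If μ(ℂⁿ) < ∞ and f : ℂⁿ → ℂ is measurable with |f(w)| ≤ C e^{α|w|²/2} for all w, then ∫_{ℂⁿ} ( ∫_{ℂⁿ} |exp(α⟨z,w⟩)| |f(w)| e^{−α|w|² − α|z|²/2} dμ(w) )^p dV(z) ≤ C' μ(ℂⁿ)^{p} for a constant C' depending only on n, α, p and C. -/
open MeasureTheory
open scoped ComplexInnerProductSpace NNReal ENNReal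

noncomputable instance EuclideanSpace.Complex.measurableSpace (n : ℕ) :
    MeasurableSpace (EuclideanSpace ℂ (Fin n)) := borel _

instance EuclideanSpace.Complex.borelSpace (n : ℕ) :
    BorelSpace (EuclideanSpace ℂ (Fin n)) := ⟨rfl⟩

/-- Lebesgue measure on `ℂⁿ ≅ ℝ^{2n}`, transported to `EuclideanSpace ℂ (Fin n)`. -/
noncomputable instance EuclideanSpace.Complex.measureSpace (n : ℕ) :
    MeasureSpace (EuclideanSpace ℂ (Fin n)) :=
  ⟨Measure.map
    ((PiLp.continuousLinearEquiv 2 ℂ (fun _ : Fin n => ℂ)).symm.toHomeomorph.toMeasurableEquiv)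
    volume⟩

/-!
The identity `|e^{α⟨w,z⟩}| e^{-α|w|²/2 - α|z|²/2} = e^{-α|z-w|²/2}` bounds the inner integrand by
`C e^{-α|z-w|²/2}`. Jensen's inequality on the finite measure `μ` turns the `p`-th power of the
inner integral into `μ(ℂⁿ)^{p-1}` times the integral of `e^{-pα|z-w|²/2}`, and integrating in `z`
first (a convolution of `μ` with a Gaussian) gives `μ(ℂⁿ)` times the Gaussian integral.
-/

theorem integrable_exp_neg_mul_sq_norm_of_isAddHaarMeasure {V : Type*} [NormedAddCommGroup V]
    [InnerProductSpace ℝ V] [FiniteDimensional ℝ V] [MeasurableSpace V] [BorelSpace V]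
    (μ : Measure V) [μ.IsAddHaarMeasure] {c : ℝ} (hc : 0 < c) :
    Integrable (fun v : V => Real.exp (-c * ‖v‖ ^ 2)) μ := by
  rw [Measure.isAddLeftInvariant_eq_smul μ volume]
  refine Integrable.smul_measure_nnreal ?_
  simpa [Complex.norm_exp, ← Complex.ofReal_pow] using
    (GaussianFourier.integrable_cexp_neg_mul_sq_norm_add (V := V) (b := c) (by simpa) 0 0).norm

instance EuclideanSpace.Complex.isAddHaarMeasure (n : ℕ) :
    (volume : Measure (EuclideanSpace ℂ (Fin n))).IsAddHaarMeasure :=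
  (PiLp.continuousLinearEquiv 2 ℂ (fun _ : Fin n => ℂ)).symm.isAddHaarMeasure_map volume

theorem EuclideanSpace.Complex.integrable_exp_neg_mul_sq_norm (n : ℕ) {c : ℝ} (hc : 0 < c) :
    Integrable (fun v : EuclideanSpace ℂ (Fin n) => Real.exp (-c * ‖v‖ ^ 2)) := by
  let : InnerProductSpace ℝ (EuclideanSpace ℂ (Fin n)) := InnerProductSpace.rclikeToReal ℂ _
  exact integrable_exp_neg_mul_sq_norm_of_isAddHaarMeasure volume hc

section ConvolutionWithFiniteMeasure

variable {G : Type*} [AddGroup G] [MeasurableSpace G] [MeasurableAdd₂ G] [MeasurableNeg G]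
  {ν : Measure G} [SFinite ν] [ν.IsAddRightInvariant] (μ : Measure G) [IsFiniteMeasure μ]
  {k : G → ℝ}

theorem integrable_integral_comp_sub (hk : Integrable k ν) :
    Integrable (fun z => ∫ w, k (z - w) ∂μ) ν := by
  simpa using ((integrable_const (1 : ℝ)).convolution_integrand
    (ContinuousLinearMap.mul ℝ ℝ) hk).integral_prod_left

theorem integral_integral_comp_sub (hk : Integrable k ν) :
    ∫ z, ∫ w, k (z - w) ∂μ ∂ν = μ.real Set.univ * ∫ x, k x ∂ν := by
  simpa [convolution_def] using
    integral_convolution (ContinuousLinearMap.mul ℝ ℝ) (integrable_const (1 : ℝ) (μ := μ)) hk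

end ConvolutionWithFiniteMeasure

theorem norm_cexp_mul_inner_mul_exp {E : Type*} [NormedAddCommGroup E] [InnerProductSpace ℂ E]
    (α : ℝ) (z w : E) :
    ‖Complex.exp (α * ⟪w, z⟫)‖ * Real.exp (-α * ‖w‖ ^ 2 / 2 - α * ‖z‖ ^ 2 / 2) =
      Real.exp (-(α / 2) * ‖z - w‖ ^ 2) := by
  rw [Complex.norm_exp, ← Real.exp_add, norm_sub_sq (𝕜 := ℂ), inner_re_symm]
  congr 1
  simp only [Complex.mul_re, Complex.ofReal_re, Complex.ofReal_im, zero_mul, sub_zero,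
    RCLike.re_to_complex]
  ring

theorem rpow_integral_le_measureReal_univ_rpow_mul_integral_rpow {X : Type*} [MeasurableSpace X]
    (μ : Measure X) [IsFiniteMeasure μ] {p : ℝ} (hp : 1 ≤ p) {g : X → ℝ}
    (hg : ∀ᵐ x ∂μ, 0 ≤ g x) (hgi : Integrable g μ) (hgpi : Integrable (fun x => g x ^ p) μ) :
    (∫ x, g x ∂μ) ^ p ≤ μ.real Set.univ ^ (p - 1) * ∫ x, g x ^ p ∂μ := by
  rcases eq_zero_or_neZero μ with rfl | hμ
  · simp [Real.zero_rpow (by linarith : p ≠ 0)]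
  have hM : 0 < μ.real Set.univ := by
    simpa [measureReal_def, ENNReal.toReal_pos_iff, pos_iff_ne_zero] using hμ.out
  have jensen : ((∫ x, g x ∂μ) / μ.real Set.univ) ^ p ≤ (∫ x, g x ^ p ∂μ) / μ.real Set.univ := by
    simpa [average_eq, div_eq_inv_mul] using
      (convexOn_rpow hp).map_average_le (Real.continuous_rpow_const (by linarith)).continuousOn
        isClosed_Ici hg hgi hgpi
  rw [Real.div_rpow (integral_nonneg_of_ae hg) hM.le, div_le_div_iff₀ (by positivity) hM] at jensen
  rw [Real.rpow_sub_one hM.ne', div_mul_eq_mul_div, le_div_iff₀ hM]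
  linarith

theorem integrable_exp_neg_mul_sq_norm_sub {E : Type*} [NormedAddCommGroup E] [MeasurableSpace E]
    [OpensMeasurableSpace E] (μ : Measure E) [IsFiniteMeasure μ] {c : ℝ} (hc : 0 ≤ c) (z : E) :
    Integrable (fun w => Real.exp (-c * ‖z - w‖ ^ 2)) μ :=
  Integrable.of_bound (by fun_prop : Continuous _).aestronglyMeasurable 1 (.of_forall fun w => by
    rw [Real.norm_of_nonneg (Real.exp_nonneg _), Real.exp_le_one_iff]
    nlinarith [sq_nonneg ‖z - w‖])

theorem rpow_integral_toeplitz_integrand_le {E : Type*} [NormedAddCommGroup E]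
    [InnerProductSpace ℂ E] [MeasurableSpace E] [OpensMeasurableSpace E] (μ : Measure E)
    [IsFiniteMeasure μ] {α p C : ℝ} (hα : 0 ≤ α) (hp : 1 ≤ p) (hC : 0 ≤ C)
    {f : E → ℂ} (hf : ∀ w, ‖f w‖ ≤ C * Real.exp (α * ‖w‖ ^ 2 / 2)) (z : E) :
    (∫ w, ‖Complex.exp ((α : ℂ) * ⟪w, z⟫)‖ * ‖f w‖ *
        Real.exp (-α * ‖w‖ ^ 2 - α * ‖z‖ ^ 2 / 2) ∂μ) ^ p ≤
      C ^ p * μ.real Set.univ ^ (p - 1) *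
        ∫ w, Real.exp (-(p * (α / 2)) * ‖z - w‖ ^ 2) ∂μ := by
  set g : E → ℝ := fun w => Real.exp (-(α / 2) * ‖z - w‖ ^ 2)
  have integrand_le : ∀ w, ‖Complex.exp ((α : ℂ) * ⟪w, z⟫)‖ * ‖f w‖ *
      Real.exp (-α * ‖w‖ ^ 2 - α * ‖z‖ ^ 2 / 2) ≤ C * g w := fun w => calc
    _ ≤ ‖Complex.exp ((α : ℂ) * ⟪w, z⟫)‖ * (C * Real.exp (α * ‖w‖ ^ 2 / 2)) *
        Real.exp (-α * ‖w‖ ^ 2 - α * ‖z‖ ^ 2 / 2) := by gcongr; exact hf w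
    _ = C * (‖Complex.exp ((α : ℂ) * ⟪w, z⟫)‖ *
        Real.exp (-α * ‖w‖ ^ 2 / 2 - α * ‖z‖ ^ 2 / 2)) := by
      rw [mul_assoc, mul_assoc, ← Real.exp_add]; ring_nf
    _ = C * g w := by rw [norm_cexp_mul_inner_mul_exp]
  have g_rpow : ∀ w, g w ^ p = Real.exp (-(p * (α / 2)) * ‖z - w‖ ^ 2) := fun w => by
    rw [← Real.exp_mul]; ring_nf
  have hgi : Integrable g μ := integrable_exp_neg_mul_sq_norm_sub μ (by positivity) z
  calc _ ≤ (C * ∫ w, g w ∂μ) ^ p := by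
        gcongr
        rw [← integral_const_mul]
        exact integral_mono_of_nonneg (.of_forall fun w => by positivity)
          (hgi.const_mul C) (.of_forall integrand_le)
    _ = C ^ p * (∫ w, g w ∂μ) ^ p := Real.mul_rpow hC (integral_nonneg fun w => by positivity)
    _ ≤ C ^ p * (μ.real Set.univ ^ (p - 1) * ∫ w, g w ^ p ∂μ) := by
        gcongr
        refine rpow_integral_le_measureReal_univ_rpow_mul_integral_rpow μ hp
          (.of_forall fun w => by positivity) hgi ?_
        simpa only [g_rpow] using integrable_exp_neg_mul_sq_norm_sub μ (by positivity) z
    _ = _ := by simp only [g_rpow, mul_assoc]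

/-- If `μ(ℂⁿ) < ∞` and `|f(w)| ≤ C e^{α|w|²/2}`, then
`∫ (∫ |exp(α⟨z,w⟩)| |f(w)| e^{−α|w|² − α|z|²/2} dμ(w))^p dV(z) ≤ C' μ(ℂⁿ)^p`
for a constant `C'` depending only on `n, α, p, C`. -/
theorem toeplitz_finite_measure_estimate (n : ℕ) (α p C : ℝ) (hα : 0 < α) (hp : 1 ≤ p)
    (hC : 0 ≤ C) :
    ∃ C' : ℝ, 0 < C' ∧
      ∀ (μ : Measure (EuclideanSpace ℂ (Fin n))) [IsFiniteMeasure μ]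
        (f : EuclideanSpace ℂ (Fin n) → ℂ), Measurable f →
        (∀ w, ‖f w‖ ≤ C * Real.exp (α * ‖w‖ ^ 2 / 2)) →
        ∫ z : EuclideanSpace ℂ (Fin n),
            (∫ w, ‖Complex.exp ((α : ℂ) * ⟪w, z⟫)‖ * ‖f w‖ *
              Real.exp (-α * ‖w‖ ^ 2 - α * ‖z‖ ^ 2 / 2) ∂μ) ^ p ≤
          C' * (μ Set.univ).toReal ^ p := by
  set c := p * (α / 2)
  have gaussian := EuclideanSpace.Complex.integrable_exp_neg_mul_sq_norm n (c := c) (by positivity)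
  set I := ∫ v : EuclideanSpace ℂ (Fin n), Real.exp (-c * ‖v‖ ^ 2)
  refine ⟨C ^ p * I + 1, by positivity, fun μ _ f _ hf => ?_⟩
  have hM : 0 ≤ μ.real Set.univ := measureReal_nonneg
  calc _ ≤ ∫ z, C ^ p * μ.real Set.univ ^ (p - 1) * ∫ w, Real.exp (-c * ‖z - w‖ ^ 2) ∂μ :=
        integral_mono_of_nonneg (.of_forall fun z => by positivity)
          ((integrable_integral_comp_sub μ gaussian).const_mul _)
          (.of_forall (rpow_integral_toeplitz_integrand_le μ hα.le hp hC hf))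
    _ = C ^ p * I * μ.real Set.univ ^ (p - 1 + 1) := by
        rw [integral_const_mul, integral_integral_comp_sub μ gaussian,
          Real.rpow_add' hM (by linarith), Real.rpow_one]
        ring
    _ ≤ (C ^ p * I + 1) * (μ Set.univ).toReal ^ p := by
        rw [sub_add_cancel, ← measureReal_def]
        nlinarith [Real.rpow_nonneg hM p]
end

section
/- Let α > 0, r > 0, and let (z_j) be an r/2-lattice in ℂⁿ. If (c_j) ∈ ℓ^∞, then f = Σ_j c_j k_{z_j} converges uniformly on compact subsets of ℂⁿ to an entire function with ‖f‖_{(∞,α)} ≤ C sup_j |c_j|, where k_{z_j}(z) = exp(α⟨z,z_j⟩ − α|z_j|²/2) and C depends only on n, α, r. -/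
open MeasureTheory Metric
open scoped ComplexInnerProductSpace NNReal ENNReal

/-! Since `|k_w(x)| e^{-α|x|²/2} = e^{-α|x-w|²/2}`, everything reduces to a uniform bound on the
Gaussian lattice sums `Σ_j e^{-β|x - z_j|²}`. Comparing volumes of the disjoint balls
`B(z_j, ε)`, at most `((m + 1 + ε) / ε)^d` points `z_j` lie within distance `m + 1` of `x`
(`d = dim_ℝ`), so grouping the `z_j` by `⌊|x - z_j|⌋` dominates the sum by the convergent series
`Σ_m ((m + 1 + ε) / ε)^d e^{-β m²}`, independently of `x`. On a bounded set, the same bound at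
`x = 0` gives summable majorants for the terms and their derivatives, hence locally uniform
convergence and holomorphy of the sum. -/

open Module
open scoped Finset

section SeparatedFamily

variable {E ι : Type*} [NormedAddCommGroup E] [NormedSpace ℝ E] [FiniteDimensional ℝ E]
  {z : ι → E} {ε : ℝ}

theorem card_le_of_pairwise_disjoint_ball
    (hz : Pairwise fun j k => Disjoint (ball (z j) ε) (ball (z k) ε)) (hε : 0 < ε) (x : E)
    {R : ℝ} (hR : 0 ≤ R) (F : Finset ι) (hF : ∀ j ∈ F, dist x (z j) ≤ R) :
    (#F : ℝ) ≤ ((R + ε) / ε) ^ finrank ℝ E := by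
  borelize E
  set μ : Measure E := Measure.addHaar
  have hvol : (#F : ℝ≥0∞) * ENNReal.ofReal (ε ^ finrank ℝ E) * μ (ball 0 1)
      ≤ ENNReal.ofReal ((R + ε) ^ finrank ℝ E) * μ (ball 0 1) :=
    calc (#F : ℝ≥0∞) * ENNReal.ofReal (ε ^ finrank ℝ E) * μ (ball 0 1)
        = ∑ j ∈ F, μ (ball (z j) ε) := by
          simp [Measure.addHaar_ball_of_pos μ _ hε, mul_assoc]
      _ = μ (⋃ j ∈ F, ball (z j) ε) :=
          (measure_biUnion_finset (fun j _ k _ hjk => hz hjk) fun _ _ => measurableSet_ball).symm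
      _ ≤ μ (ball x (R + ε)) := measure_mono <| Set.iUnion₂_subset fun j hj =>
          ball_subset_ball' (by rw [dist_comm]; linarith [hF j hj])
      _ = ENNReal.ofReal ((R + ε) ^ finrank ℝ E) * μ (ball 0 1) :=
          Measure.addHaar_ball_of_pos μ x (by linarith)
  rw [ENNReal.mul_le_mul_iff_left (measure_ball_pos μ 0 one_pos).ne' measure_ball_lt_top.ne,
    ← ENNReal.ofReal_natCast, ← ENNReal.ofReal_mul (by positivity),
    ENNReal.ofReal_le_ofReal_iff (by positivity)] at hvol
  rwa [div_pow, le_div_iff₀ (by positivity)]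

noncomputable def gaussianShellSum (ε β : ℝ) (d : ℕ) : ℝ :=
  ∑' m : ℕ, ((m + 1 + ε) / ε) ^ d * Real.exp (-β * m ^ 2)

theorem summable_gaussianShell (d : ℕ) (hε : 0 < ε) {β : ℝ} (hβ : 0 < β) :
    Summable fun m : ℕ => ((m + 1 + ε) / ε) ^ d * Real.exp (-β * m ^ 2) := by
  have hshift : Summable fun m : ℕ => ((m + 1 : ℕ) : ℝ) ^ d * Real.exp (-β * (m + 1 : ℕ)) :=
    (summable_nat_add_iff 1).mpr (Real.summable_pow_mul_exp_neg_nat_mul d hβ)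
  refine .of_nonneg_of_le (fun m => by positivity) (fun m => ?_)
    (hshift.mul_left (((1 + ε) / ε) ^ d * Real.exp β))
  have hbase : (m + 1 + ε) / ε ≤ (1 + ε) / ε * ((m + 1 : ℕ) : ℝ) := by
    rw [div_mul_eq_mul_div, div_le_div_iff_of_pos_right hε]
    push_cast
    nlinarith [(m.cast_nonneg : (0 : ℝ) ≤ m)]
  have hexp : Real.exp (-β * m ^ 2) ≤ Real.exp β * Real.exp (-β * (m + 1 : ℕ)) := by
    rw [← Real.exp_add, Real.exp_le_exp]
    have : (m : ℝ) ≤ m ^ 2 := by exact_mod_cast Nat.le_self_pow two_ne_zero m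
    push_cast
    nlinarith
  calc ((m + 1 + ε) / ε) ^ d * Real.exp (-β * m ^ 2)
      ≤ ((1 + ε) / ε * ((m + 1 : ℕ) : ℝ)) ^ d * (Real.exp β * Real.exp (-β * (m + 1 : ℕ))) := by
        gcongr
    _ = ((1 + ε) / ε) ^ d * Real.exp β
          * (((m + 1 : ℕ) : ℝ) ^ d * Real.exp (-β * (m + 1 : ℕ))) := by
        rw [mul_pow]; ring

theorem gaussianShellSum_pos (d : ℕ) (hε : 0 < ε) {β : ℝ} (hβ : 0 < β) :
    0 < gaussianShellSum ε β d :=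
  (summable_gaussianShell d hε hβ).tsum_pos (fun _ => by positivity) 0 (by positivity)

theorem sum_exp_neg_mul_dist_sq_le
    (hz : Pairwise fun j k => Disjoint (ball (z j) ε) (ball (z k) ε)) (hε : 0 < ε)
    {β : ℝ} (hβ : 0 < β) (x : E) (F : Finset ι) :
    ∑ j ∈ F, Real.exp (-β * dist x (z j) ^ 2) ≤ gaussianShellSum ε β (finrank ℝ E) := by
  classical
  set shell : ι → ℕ := fun j => ⌊dist x (z j)⌋₊
  rw [← Finset.sum_fiberwise_of_maps_to (g := shell) (t := F.image shell)
    fun j hj => Finset.mem_image_of_mem shell hj]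
  refine (Finset.sum_le_sum fun m _ => ?_).trans
    ((summable_gaussianShell _ hε hβ).sum_le_tsum _ fun m _ => by positivity)
  have hshell : ∀ j ∈ F.filter (shell · = m), (m : ℝ) ≤ dist x (z j) ∧ dist x (z j) ≤ m + 1 := by
    intro j hj
    rw [← (Finset.mem_filter.mp hj).2]
    exact ⟨Nat.floor_le dist_nonneg, (Nat.lt_floor_add_one _).le⟩
  calc ∑ j ∈ F with shell j = m, Real.exp (-β * dist x (z j) ^ 2)
      ≤ ∑ j ∈ F with shell j = m, Real.exp (-β * m ^ 2) :=
        Finset.sum_le_sum fun j hj => Real.exp_le_exp.mpr <| by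
          have := pow_le_pow_left₀ m.cast_nonneg (hshell j hj).1 2
          nlinarith
    _ = #(F.filter (shell · = m)) * Real.exp (-β * m ^ 2) := by
        rw [Finset.sum_const, nsmul_eq_mul]
    _ ≤ ((m + 1 + ε) / ε) ^ finrank ℝ E * Real.exp (-β * m ^ 2) := by
        gcongr
        exact card_le_of_pairwise_disjoint_ball hz hε x (by positivity) _
          fun j hj => (hshell j hj).2

theorem summable_exp_neg_mul_dist_sq
    (hz : Pairwise fun j k => Disjoint (ball (z j) ε) (ball (z k) ε)) (hε : 0 < ε)
    {β : ℝ} (hβ : 0 < β) (x : E) :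
    Summable fun j => Real.exp (-β * dist x (z j) ^ 2) :=
  summable_of_sum_le (fun _ => (Real.exp_pos _).le) (sum_exp_neg_mul_dist_sq_le hz hε hβ x)

theorem tsum_exp_neg_mul_dist_sq_le
    (hz : Pairwise fun j k => Disjoint (ball (z j) ε) (ball (z k) ε)) (hε : 0 < ε)
    {β : ℝ} (hβ : 0 < β) (x : E) :
    ∑' j, Real.exp (-β * dist x (z j) ^ 2) ≤ gaussianShellSum ε β (finrank ℝ E) :=
  tsum_le_of_sum_le' (gaussianShellSum_pos _ hε hβ).le (sum_exp_neg_mul_dist_sq_le hz hε hβ x)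

theorem summable_exp_neg_mul_norm_sq
    (hz : Pairwise fun j k => Disjoint (ball (z j) ε) (ball (z k) ε)) (hε : 0 < ε)
    {β : ℝ} (hβ : 0 < β) :
    Summable fun j => Real.exp (-β * ‖z j‖ ^ 2) := by
  simpa only [dist_zero_left] using summable_exp_neg_mul_dist_sq hz hε hβ 0

end SeparatedFamily

theorem mul_exp_neg_mul_sq_le {a : ℝ} (ha : 0 < a) (t : ℝ) :
    t * Real.exp (-a * t ^ 2) ≤ (1 + 2 / a) * Real.exp (-(a / 2) * t ^ 2) := by
  have hpoly : t ≤ (1 + 2 / a) * (1 + a / 2 * t ^ 2) := by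
    have : 2 / a * (a / 2 * t ^ 2) = t ^ 2 := by field_simp
    nlinarith [sq_nonneg (t - 1), sq_nonneg t, div_pos two_pos ha]
  have hexp : t ≤ (1 + 2 / a) * Real.exp (a / 2 * t ^ 2) :=
    hpoly.trans (by gcongr; linarith [Real.add_one_le_exp (a / 2 * t ^ 2)])
  calc t * Real.exp (-a * t ^ 2)
      ≤ (1 + 2 / a) * Real.exp (a / 2 * t ^ 2) * Real.exp (-a * t ^ 2) := by gcongr
    _ = (1 + 2 / a) * Real.exp (-(a / 2) * t ^ 2) := by
        rw [mul_assoc, ← Real.exp_add]; ring_nf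

section FockKernel

variable {E : Type*} [NormedAddCommGroup E] [InnerProductSpace ℂ E]

-- The normalized reproducing kernel of the Fock space `F²_α`. Mathlib's `⟪w, x⟫` is
-- conjugate-linear in `w`, so this is the paper's `exp (α ⟨x, w⟩ - α |w|² / 2)`, entire in `x`.
noncomputable def fockKernel (α : ℝ) (w x : E) : ℂ :=
  Complex.exp ((α : ℂ) * ⟪w, x⟫ - (α : ℂ) * (‖w‖ : ℂ) ^ 2 / 2)

theorem norm_fockKernel (α : ℝ) (w x : E) :
    ‖fockKernel α w x‖ = Real.exp (α * ‖x‖ ^ 2 / 2) * Real.exp (-(α / 2) * dist x w ^ 2) := by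
  have hre : (⟪w, x⟫ : ℂ).re = (‖x‖ ^ 2 + ‖w‖ ^ 2 - dist x w ^ 2) / 2 := by
    rw [dist_eq_norm, norm_sub_sq (𝕜 := ℂ), ← inner_re_symm]
    simp only [RCLike.re_to_complex]
    ring
  rw [fockKernel, Complex.norm_exp, ← Real.exp_add]
  congr 1
  simp only [Complex.sub_re, Complex.re_ofReal_mul, hre]
  norm_cast
  ring

theorem norm_fockKernel_le_of_norm_le {α : ℝ} (hα : 0 ≤ α) (w : E) {x : E} {R : ℝ}
    (hx : ‖x‖ ≤ R) :
    ‖fockKernel α w x‖ ≤ Real.exp (α * R ^ 2) * Real.exp (-(α / 4) * ‖w‖ ^ 2) := by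
  have hw : ‖w‖ ≤ ‖x‖ + dist x w := by
    rw [dist_eq_norm']; exact norm_le_norm_add_norm_sub' w x
  rw [norm_fockKernel, ← Real.exp_add, ← Real.exp_add, Real.exp_le_exp]
  have hsq : ‖w‖ ^ 2 ≤ 2 * ‖x‖ ^ 2 + 2 * dist x w ^ 2 := by
    nlinarith [sq_nonneg (‖x‖ - dist x w), norm_nonneg w]
  have hxR : ‖x‖ ^ 2 ≤ R ^ 2 := pow_le_pow_left₀ (norm_nonneg x) hx 2
  nlinarith [mul_le_mul_of_nonneg_left hsq hα, mul_le_mul_of_nonneg_left hxR hα]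

theorem norm_mul_fockKernel_le_of_norm_le {α : ℝ} (hα : 0 ≤ α) {a : ℂ} {M : ℝ} (ha : ‖a‖ ≤ M)
    (w : E) {x : E} {R : ℝ} (hx : ‖x‖ ≤ R) :
    ‖a * fockKernel α w x‖ ≤ M * Real.exp (α * R ^ 2) * Real.exp (-(α / 4) * ‖w‖ ^ 2) := by
  rw [norm_mul, mul_assoc]
  exact mul_le_mul ha (norm_fockKernel_le_of_norm_le hα w hx) (norm_nonneg _)
    ((norm_nonneg a).trans ha)

theorem hasFDerivAt_fockKernel (α : ℝ) (w x : E) :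
    HasFDerivAt (fockKernel α w) (fockKernel α w x • (α : ℂ) • innerSL ℂ w) x :=
  (((innerSL ℂ w).hasFDerivAt.const_mul (α : ℂ)).sub_const _).cexp

theorem norm_fderiv_fockKernel {α : ℝ} (hα : 0 ≤ α) (w x : E) :
    ‖fockKernel α w x • (α : ℂ) • innerSL ℂ w‖ = ‖fockKernel α w x‖ * (α * ‖w‖) := by
  rw [norm_smul, norm_smul, innerSL_apply_norm, Complex.norm_real, Real.norm_of_nonneg hα]

end FockKernel

section FockSeries

variable {E : Type*} [NormedAddCommGroup E] [InnerProductSpace ℂ E] [FiniteDimensional ℂ E]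
  {z : ℕ → E} {ε α : ℝ} {c : ℕ → ℂ} {M : ℝ}

theorem tendstoUniformlyOn_sum_fockKernel
    (hz : Pairwise fun j k => Disjoint (ball (z j) ε) (ball (z k) ε)) (hε : 0 < ε) (hα : 0 < α)
    (hM : ∀ j, ‖c j‖ ≤ M) {K : Set E} (hK : IsCompact K) :
    TendstoUniformlyOn (fun N x => ∑ j ∈ Finset.range N, c j * fockKernel α (z j) x)
      (fun x => ∑' j, c j * fockKernel α (z j) x) Filter.atTop K := by
  obtain ⟨R, hKR⟩ := hK.isBounded.subset_closedBall 0
  exact tendstoUniformlyOn_tsum_nat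
    ((summable_exp_neg_mul_norm_sq hz hε (by positivity)).mul_left _)
    fun j x hx => norm_mul_fockKernel_le_of_norm_le hα.le (hM j) (z j)
      (mem_closedBall_zero_iff.mp (hKR hx))

theorem differentiable_tsum_fockKernel
    (hz : Pairwise fun j k => Disjoint (ball (z j) ε) (ball (z k) ε)) (hε : 0 < ε) (hα : 0 < α)
    (hM : ∀ j, ‖c j‖ ≤ M) :
    Differentiable ℂ fun x => ∑' j, c j * fockKernel α (z j) x := by
  intro x₀
  set R := ‖x₀‖ + 1
  have hx₀ : x₀ ∈ ball (0 : E) R := mem_ball_zero_iff.mpr (lt_add_one _)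
  have hbound : ∀ j, ∀ x ∈ ball (0 : E) R,
      ‖c j • (fockKernel α (z j) x • (α : ℂ) • innerSL ℂ (z j))‖
        ≤ M * Real.exp (α * R ^ 2) * α * (1 + 2 / (α / 4))
          * Real.exp (-(α / 4 / 2) * ‖z j‖ ^ 2) := by
    intro j x hx
    have hxR : ‖x‖ ≤ R := (mem_ball_zero_iff.mp hx).le
    calc ‖c j • (fockKernel α (z j) x • (α : ℂ) • innerSL ℂ (z j))‖
        = ‖c j * fockKernel α (z j) x‖ * (α * ‖z j‖) := by
          rw [norm_smul, norm_fderiv_fockKernel hα.le, norm_mul, mul_assoc]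
      _ ≤ M * Real.exp (α * R ^ 2) * Real.exp (-(α / 4) * ‖z j‖ ^ 2) * (α * ‖z j‖) := by
          gcongr; exact norm_mul_fockKernel_le_of_norm_le hα.le (hM j) (z j) hxR
      _ = M * Real.exp (α * R ^ 2) * α * (‖z j‖ * Real.exp (-(α / 4) * ‖z j‖ ^ 2)) := by ring
      _ ≤ _ := by
          rw [mul_assoc _ (1 + _)]
          have hM₀ : 0 ≤ M := (norm_nonneg _).trans (hM 0)
          exact mul_le_mul_of_nonneg_left (mul_exp_neg_mul_sq_le (by positivity) _)
            (by positivity)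
  have hsum : Summable fun j => c j * fockKernel α (z j) x₀ :=
    .of_norm_bounded ((summable_exp_neg_mul_norm_sq hz hε (by positivity)).mul_left _)
      fun j => norm_mul_fockKernel_le_of_norm_le hα.le (hM j) (z j) le_rfl
  exact (hasFDerivAt_tsum_of_isPreconnected
    ((summable_exp_neg_mul_norm_sq hz hε (by positivity)).mul_left _) isOpen_ball
    (convex_ball _ _).isPreconnected
    (fun j x _ => (hasFDerivAt_fockKernel α (z j) x).const_mul (c j)) hbound hx₀ hsum
    hx₀).differentiableAt

theorem norm_tsum_fockKernel_mul_exp_le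
    (hz : Pairwise fun j k => Disjoint (ball (z j) ε) (ball (z k) ε)) (hε : 0 < ε) (hα : 0 < α)
    (hM : ∀ j, ‖c j‖ ≤ M) (x : E) :
    ‖∑' j, c j * fockKernel α (z j) x‖ * Real.exp (-α * ‖x‖ ^ 2 / 2)
      ≤ gaussianShellSum ε (α / 2) (finrank ℝ E) * M := by
  have hM₀ : 0 ≤ M := (norm_nonneg _).trans (hM 0)
  have hterm : ∀ j, ‖c j * fockKernel α (z j) x‖
      ≤ M * Real.exp (α * ‖x‖ ^ 2 / 2) * Real.exp (-(α / 2) * dist x (z j) ^ 2) := fun j => by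
    rw [norm_mul, norm_fockKernel, ← mul_assoc]
    gcongr
    exact hM j
  have hsum := summable_exp_neg_mul_dist_sq hz hε (half_pos hα) x
  calc ‖∑' j, c j * fockKernel α (z j) x‖ * Real.exp (-α * ‖x‖ ^ 2 / 2)
      ≤ (M * Real.exp (α * ‖x‖ ^ 2 / 2) * ∑' j, Real.exp (-(α / 2) * dist x (z j) ^ 2))
          * Real.exp (-α * ‖x‖ ^ 2 / 2) := by
        gcongr
        rw [← tsum_mul_left]
        exact tsum_of_norm_bounded (hsum.mul_left _).hasSum hterm
    _ = M * ∑' j, Real.exp (-(α / 2) * dist x (z j) ^ 2) := by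
        rw [mul_right_comm, mul_assoc M, ← Real.exp_add,
          show α * ‖x‖ ^ 2 / 2 + -α * ‖x‖ ^ 2 / 2 = 0 by ring, Real.exp_zero, mul_one]
    _ ≤ gaussianShellSum ε (α / 2) (finrank ℝ E) * M := by
        rw [mul_comm]
        exact mul_le_mul_of_nonneg_right (tsum_exp_neg_mul_dist_sq_le hz hε (half_pos hα) x) hM₀

end FockSeries

theorem atomic_sum_in_growth_space_general (n : ℕ) (α r : ℝ) (hα : 0 < α) (hr : 0 < r)
    (z : ℕ → EuclideanSpace ℂ (Fin n))
    (hdisj : Pairwise fun j k => Disjoint (ball (z j) (r / 4)) (ball (z k) (r / 4))) :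
    ∃ C : ℝ, 0 < C ∧
      ∀ (c : ℕ → ℂ) (M : ℝ), (∀ j, ‖c j‖ ≤ M) →
        ∃ f : EuclideanSpace ℂ (Fin n) → ℂ, Differentiable ℂ f ∧
          (∀ K : Set (EuclideanSpace ℂ (Fin n)), IsCompact K →
            TendstoUniformlyOn
              (fun (N : ℕ) (x : EuclideanSpace ℂ (Fin n)) =>
                ∑ j ∈ Finset.range N,
                  c j * Complex.exp ((α : ℂ) * ⟪z j, x⟫ - (α : ℂ) * (‖z j‖ : ℂ) ^ 2 / 2))
              f Filter.atTop K) ∧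
          ∀ x : EuclideanSpace ℂ (Fin n),
            ‖f x‖ * Real.exp (-α * ‖x‖ ^ 2 / 2) ≤ C * M := by
  have hε : 0 < r / 4 := by positivity
  exact ⟨_, gaussianShellSum_pos _ hε (half_pos hα), fun c M hM =>
    ⟨_, differentiable_tsum_fockKernel hdisj hε hα hM,
      fun K hK => tendstoUniformlyOn_sum_fockKernel hdisj hε hα hM hK,
      norm_tsum_fockKernel_mul_exp_le hdisj hε hα hM⟩⟩

/-- If `(z_j)` is an `r/2`-lattice and `(c_j) ∈ ℓ^∞`, then `f = Σ_j c_j k_{z_j}` converges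
uniformly on compact sets to an entire function with `‖f‖_{(∞,α)} ≤ C sup_j |c_j|`,
where `C` depends only on `n, α, r`. -/
theorem atomic_sum_in_growth_space (n : ℕ) (α r : ℝ) (hα : 0 < α) (hr : 0 < r)
    (z : ℕ → EuclideanSpace ℂ (Fin n))
    (hcover : ∀ x : EuclideanSpace ℂ (Fin n), ∃ j, x ∈ ball (z j) (r / 2))
    (hdisj : Pairwise fun j k => Disjoint (ball (z j) (r / 4)) (ball (z k) (r / 4))) :
    ∃ C : ℝ, 0 < C ∧
      ∀ (c : ℕ → ℂ) (M : ℝ), (∀ j, ‖c j‖ ≤ M) →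
        ∃ f : EuclideanSpace ℂ (Fin n) → ℂ, Differentiable ℂ f ∧
          (∀ K : Set (EuclideanSpace ℂ (Fin n)), IsCompact K →
            TendstoUniformlyOn
              (fun (N : ℕ) (x : EuclideanSpace ℂ (Fin n)) =>
                ∑ j ∈ Finset.range N,
                  c j * Complex.exp ((α : ℂ) * ⟪z j, x⟫ - (α : ℂ) * (‖z j‖ : ℂ) ^ 2 / 2))
              f Filter.atTop K) ∧
          ∀ x : EuclideanSpace ℂ (Fin n),
            ‖f x‖ * Real.exp (-α * ‖x‖ ^ 2 / 2) ≤ C * M :=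
  atomic_sum_in_growth_space_general n α r hα hr z hdisj
end
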